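/- arXiv:2108.12400 — 2 statements merged into one kernel-verified Lean document; each statement's English description precedes it below -/
import Mathlib

section
/- Let φ : (K²,‖·‖₁) → (K²,‖·‖₁) be a bijective isometry with φ(0,0) = (0,0). Then either φ maps the set {(a,0) : a ∈ K} onto itself and {(0,b) : b ∈ K} onto itself, or φ maps {(a,0) : a ∈ K} onto {(0,b) : b ∈ K} and {(0,b) : b ∈ K} onto {(a,0) : a ∈ K}. -/
/-!
An isometry `φ` of `(K², ‖·‖₁)` fixing the origin preserves `‖·‖₁`, and it preserves the union
of the two axes, because that union has a purely metric description: `p` lies on an axis iff no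
point `q` with `‖p - q‖₁ < ‖p‖₁` has `‖q‖₁ < ‖p‖₁`. The two axes are then told apart by the
ultrametric inequality: nonzero points `p`, `q` of the axes lie on the same axis iff
`‖p - q‖₁ < ‖p‖₁ + ‖q‖₁`. Hence `φ` maps the first axis into the axis of `φ (1, 0)` and the
second axis into the other one; composing with the coordinate swap reduces to the case where
`φ (1, 0)` lies on the first axis.
-/

lemma fst_eq_zero_iff_of_mem_axes {R : Type*} [Zero R] {p : R × R} (hp : p.1 = 0 ∨ p.2 = 0) :
    p.1 = 0 ↔ p = 0 ∨ p.2 ≠ 0 := by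
  rw [Prod.ext_iff]
  tauto

namespace AbsoluteValue

section Construction

variable {R S : Type*} [Semiring R] [Semiring S] [LinearOrder S] [IsOrderedRing S]

def ofIsNonarchimedean (f : R → S) (nonneg : ∀ a, 0 ≤ f a) (eq_zero : ∀ a, f a = 0 ↔ a = 0)
    (map_mul : ∀ a b, f (a * b) = f a * f b) (hna : IsNonarchimedean f) : AbsoluteValue R S where
  toFun := f
  map_mul' := map_mul
  nonneg' := nonneg
  eq_zero' := eq_zero
  add_le' a b := (hna a b).trans (max_le_add_of_nonneg (nonneg a) (nonneg b))

end Construction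

section L1

variable {R S : Type*} [Ring R] [Semiring S] [PartialOrder S]

def l1Norm (abv : AbsoluteValue R S) (p : R × R) : S := abv p.1 + abv p.2

def l1Dist (abv : AbsoluteValue R S) (p q : R × R) : S := abv (p.1 - q.1) + abv (p.2 - q.2)

def IsL1Isometry (abv : AbsoluteValue R S) (φ : R × R → R × R) : Prop :=
  ∀ p q, abv.l1Dist (φ p) (φ q) = abv.l1Dist p q

variable {abv : AbsoluteValue R S}

@[simp]
lemma l1Dist_zero_right (p : R × R) : abv.l1Dist p 0 = abv.l1Norm p := by
  simp [l1Dist, l1Norm]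

namespace IsL1Isometry

variable {φ : R × R → R × R} (hφ : abv.IsL1Isometry φ)
include hφ

lemma swap_comp : abv.IsL1Isometry (Prod.swap ∘ φ) := fun p q ↦ by
  rw [← hφ p q]
  exact add_comm _ _

lemma l1Norm_map (h0 : φ 0 = 0) (p : R × R) : abv.l1Norm (φ p) = abv.l1Norm p := by
  rw [← l1Dist_zero_right, ← h0, hφ, l1Dist_zero_right]

end IsL1Isometry

end L1

variable {R S : Type*} [Ring R] [CommRing S] [LinearOrder S] {abv : AbsoluteValue R S}

lemma le_of_map_sub_lt (hna : IsNonarchimedean abv) {a b : R} (h : abv (a - b) < abv a) :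
    abv a ≤ abv b := by
  have := hna (a - b) b
  rw [sub_add_cancel] at this
  exact (le_max_iff.1 this).resolve_left h.not_ge

variable [IsStrictOrderedRing S]

lemma l1Norm_eq_zero {p : R × R} : abv.l1Norm p = 0 ↔ p = 0 := by
  rw [l1Norm, add_eq_zero_iff_of_nonneg (abv.nonneg _) (abv.nonneg _), abv.eq_zero, abv.eq_zero,
    Prod.ext_iff, Prod.fst_zero, Prod.snd_zero]

lemma map_sub_le_max (hna : IsNonarchimedean abv) (a b : R) :
    abv (a - b) ≤ max (abv a) (abv b) := by
  simpa only [sub_eq_add_neg, abv.map_neg] using hna a (-b)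

lemma fst_eq_zero_or_snd_eq_zero_iff (hna : IsNonarchimedean abv) (p : R × R) :
    p.1 = 0 ∨ p.2 = 0 ↔
      ∀ q, abv.l1Dist p q < abv.l1Norm p → abv.l1Norm p ≤ abv.l1Norm q := by
  obtain ⟨a, b⟩ := p
  simp only [l1Dist, l1Norm]
  constructor
  · rintro (rfl | rfl) ⟨c, d⟩ h <;> simp only [zero_sub, abv.map_neg, abv.map_zero] at h ⊢
    · have := le_of_map_sub_lt hna (by linarith [abv.nonneg c] : abv (b - d) < abv b)
      linarith [abv.nonneg c]
    · have := le_of_map_sub_lt hna (by linarith [abv.nonneg d] : abv (a - c) < abv a)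
      linarith [abv.nonneg d]
  · intro h
    by_contra! hab
    have hb := abv.pos hab.2
    have := h (a, 0)
    simp only [sub_self, sub_zero, abv.map_zero, add_zero, zero_add] at this
    linarith [this (by linarith [abv.pos hab.1])]

lemma snd_eq_zero_iff_of_mem_axes (hna : IsNonarchimedean abv) {p e : R × R}
    (hp : p.1 = 0 ∨ p.2 = 0) (he : e.2 = 0) (he₁ : e.1 ≠ 0) :
    p.2 = 0 ↔ p = 0 ∨ abv.l1Dist p e < abv.l1Norm p + abv.l1Norm e := by
  obtain ⟨a, b⟩ := p
  obtain ⟨c, d⟩ := e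
  simp only at hp he he₁
  subst he
  simp only [l1Dist, l1Norm, Prod.mk_eq_zero]
  rcases hp with rfl | rfl
  · simp [abv.map_neg, add_comm]
  · simp only [true_iff, sub_zero, abv.map_zero, add_zero]
    by_cases ha : a = 0
    · exact Or.inl ⟨ha, trivial⟩
    · exact Or.inr <| (map_sub_le_max hna a c).trans_lt <|
        max_lt (lt_add_of_pos_right _ (abv.pos he₁)) (lt_add_of_pos_left _ (abv.pos ha))

namespace IsL1Isometry

variable {φ : R × R → R × R} (hφ : abv.IsL1Isometry φ) (h0 : φ 0 = 0)
include hφ h0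

lemma map_eq_zero_iff {p : R × R} : φ p = 0 ↔ p = 0 := by
  rw [← l1Norm_eq_zero (abv := abv), hφ.l1Norm_map h0, l1Norm_eq_zero]

variable (hna : IsNonarchimedean abv) (hsurj : Function.Surjective φ)
include hna hsurj

lemma mem_axes_map_iff {p : R × R} : (φ p).1 = 0 ∨ (φ p).2 = 0 ↔ p.1 = 0 ∨ p.2 = 0 := by
  rw [fst_eq_zero_or_snd_eq_zero_iff hna, fst_eq_zero_or_snd_eq_zero_iff hna, hsurj.forall]
  simp only [hφ _, hφ.l1Norm_map h0]

variable [Nontrivial R]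

lemma snd_map_eq_zero_iff (he : (φ (1, 0)).2 = 0) (p : R × R) : (φ p).2 = 0 ↔ p.2 = 0 := by
  by_cases hp : p.1 = 0 ∨ p.2 = 0
  · have he₁ : (φ (1, 0)).1 ≠ 0 := fun he₁ ↦ by
      simpa using (hφ.map_eq_zero_iff h0).1 (Prod.ext he₁ he)
    rw [snd_eq_zero_iff_of_mem_axes hna ((hφ.mem_axes_map_iff h0 hna hsurj).2 hp) he he₁,
      snd_eq_zero_iff_of_mem_axes hna (e := (1, 0)) hp rfl one_ne_zero, hφ.map_eq_zero_iff h0,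
      hφ.l1Norm_map h0, hφ.l1Norm_map h0, hφ]
  · have hφp := mt (hφ.mem_axes_map_iff h0 hna hsurj).1 hp
    rw [not_or] at hp hφp
    exact iff_of_false hφp.2 hp.2

lemma fst_map_eq_zero_iff (he : (φ (1, 0)).2 = 0) (p : R × R) : (φ p).1 = 0 ↔ p.1 = 0 := by
  by_cases hp : p.1 = 0 ∨ p.2 = 0
  · rw [fst_eq_zero_iff_of_mem_axes ((hφ.mem_axes_map_iff h0 hna hsurj).2 hp),
      fst_eq_zero_iff_of_mem_axes hp, hφ.map_eq_zero_iff h0, ne_eq, ne_eq,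
      hφ.snd_map_eq_zero_iff h0 hna hsurj he]
  · have hφp := mt (hφ.mem_axes_map_iff h0 hna hsurj).1 hp
    rw [not_or] at hp hφp
    exact iff_of_false hφp.1 hp.1

theorem image_axes :
    (φ '' {p | p.2 = 0} = {p | p.2 = 0} ∧ φ '' {p | p.1 = 0} = {p | p.1 = 0}) ∨
      (φ '' {p | p.2 = 0} = {p | p.1 = 0} ∧ φ '' {p | p.1 = 0} = {p | p.2 = 0}) := by
  have image_eq {s t : Set (R × R)} (h : ∀ p, φ p ∈ t ↔ p ∈ s) : φ '' s = t := by
    rw [← Set.image_preimage_eq t hsurj, ← Set.ext h]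
    rfl
  rcases (hφ.mem_axes_map_iff h0 hna hsurj (p := (1, 0))).2 (Or.inr rfl) with he | he
  · have hψ := hφ.swap_comp
    have hψ0 : (Prod.swap ∘ φ) 0 = 0 := by simp [h0]
    have hψsurj := Prod.swap_surjective.comp hsurj
    exact Or.inr ⟨image_eq (hψ.snd_map_eq_zero_iff hψ0 hna hψsurj he),
      image_eq (hψ.fst_map_eq_zero_iff hψ0 hna hψsurj he)⟩
  · exact Or.inl ⟨image_eq (hφ.snd_map_eq_zero_iff h0 hna hsurj he),
      image_eq (hφ.fst_map_eq_zero_iff h0 hna hsurj he)⟩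

end IsL1Isometry

end AbsoluteValue

/-- a centred bijective isometry of `(K², ‖·‖₁)` either maps each
axis onto itself, or swaps the two axes. -/
theorem stmt_5 {K : Type*} [Field K] (v : K → ℝ)
    (hnonneg : ∀ a : K, 0 ≤ v a)
    (hzero : ∀ a : K, v a = 0 ↔ a = 0)
    (hmul : ∀ a b : K, v (a * b) = v a * v b)
    (hultra : ∀ a b : K, v (a + b) ≤ max (v a) (v b))
    (φ : K × K → K × K) (hbij : Function.Bijective φ)
    (hiso : ∀ p q : K × K,
      v ((φ p).1 - (φ q).1) + v ((φ p).2 - (φ q).2)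
        = v (p.1 - q.1) + v (p.2 - q.2))
    (h0 : φ (0, 0) = (0, 0)) :
    (φ '' {p : K × K | p.2 = 0} = {p : K × K | p.2 = 0} ∧
      φ '' {p : K × K | p.1 = 0} = {p : K × K | p.1 = 0}) ∨
    (φ '' {p : K × K | p.2 = 0} = {p : K × K | p.1 = 0} ∧
      φ '' {p : K × K | p.1 = 0} = {p : K × K | p.2 = 0}) :=
  AbsoluteValue.IsL1Isometry.image_axes
    (abv := .ofIsNonarchimedean v hnonneg hzero hmul hultra) hiso h0 hultra hbij.2
end

section
/- Let φ : (Kⁿ,‖·‖₁) → (Kⁿ,‖·‖₁) be a bijective isometry with φ(0) = 0. Then for every x ∈ Kⁿ, the number of nonzero coordinates of φ(x) equals the number of nonzero coordinates of x. -/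
/-!
For the ℓ¹-distance `d` built from an ultrametric absolute value, `v a + v b = v (a + b)` forces
`a = 0` or `b = 0`, so a point `y` lies metrically between `0` and `z`
(`d 0 y + d y z = d 0 z`) exactly when each coordinate `y i` is `0` or `z i`. This interval has
`2 ^ k` points, `k` the number of nonzero coordinates of `z`, and a bijective isometry fixing `0`
maps the interval between `0` and `x` onto the one between `0` and `φ x`.
-/

open Finset Set

section Ultrametric

variable {K : Type*} [AddGroup K]

lemma apply_add_le_add_of_ultrametric {v : K → ℝ} (hnonneg : ∀ a, 0 ≤ v a)
    (hultra : ∀ a b, v (a + b) ≤ max (v a) (v b)) (x y : K) : v (x + y) ≤ v x + v y :=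
  (hultra x y).trans (max_le_add_of_nonneg (hnonneg x) (hnonneg y))

lemma add_eq_apply_add_iff_of_ultrametric {v : K → ℝ} (hnonneg : ∀ a, 0 ≤ v a)
    (hzero : ∀ a, v a = 0 ↔ a = 0) (hultra : ∀ a b, v (a + b) ≤ max (v a) (v b)) (x y : K) :
    v x + v y = v (x + y) ↔ x = 0 ∨ y = 0 := by
  constructor
  · intro h
    have hmax := hultra x y
    rcases le_total (v x) (v y) with hxy | hxy
    · left; rw [← hzero]; linarith [hnonneg x, max_eq_right hxy]
    · right; rw [← hzero]; linarith [hnonneg y, max_eq_left hxy]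
  · rintro (rfl | rfl) <;> simp [(hzero 0).2 rfl]

end Ultrametric

def metricInterval {α : Type*} (d : α → α → ℝ) (a b : α) : Set α :=
  {y | d a y + d y b = d a b}

lemma image_metricInterval {α : Type*} {d : α → α → ℝ} {φ : α → α} (hφ : Function.Bijective φ)
    (hd : ∀ x y, d (φ x) (φ y) = d x y) (a b : α) :
    φ '' metricInterval d a b = metricInterval d (φ a) (φ b) := by
  ext y'
  obtain ⟨y, rfl⟩ := hφ.surjective y'
  simp [metricInterval, hφ.injective.mem_set_image, hd]

def l1Dist {ι K : Type*} [Fintype ι] [Sub K] (v : K → ℝ) (x y : ι → K) : ℝ :=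
  ∑ i, v (x i - y i)

lemma metricInterval_l1Dist_zero {ι K : Type*} [Fintype ι] [AddGroup K] {v : K → ℝ}
    (hnonneg : ∀ a, 0 ≤ v a) (hzero : ∀ a, v a = 0 ↔ a = 0)
    (hultra : ∀ a b, v (a + b) ≤ max (v a) (v b)) (z : ι → K) :
    metricInterval (l1Dist v) 0 z = Set.pi univ fun i => {0, z i} := by
  ext y
  simp only [metricInterval, l1Dist, mem_ofPred_eq, Pi.zero_apply,
    ← Finset.sum_add_distrib, mem_univ_pi, mem_insert_iff, mem_singleton_iff]
  have htriangle : ∀ i ∈ Finset.univ, v (0 - z i) ≤ v (0 - y i) + v (y i - z i) := fun i _ => by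
    simpa only [sub_add_sub_cancel] using
      apply_add_le_add_of_ultrametric hnonneg hultra (0 - y i) (y i - z i)
  rw [eq_comm, Finset.sum_eq_sum_iff_of_le htriangle]
  simp only [Finset.mem_univ, forall_const]
  refine forall_congr' fun i => ?_
  rw [eq_comm, ← sub_add_sub_cancel 0 (y i) (z i),
    add_eq_apply_add_iff_of_ultrametric hnonneg hzero hultra, zero_sub, neg_eq_zero, sub_eq_zero]

lemma encard_pi_pair_zero {ι K : Type*} [Fintype ι] [Zero K] (z : ι → K) :
    (Set.pi univ fun i => ({0, z i} : Set K)).encard = 2 ^ {i | z i ≠ 0}.ncard := by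
  classical
  have hpair : ∀ i, ({0, z i} : Set K).encard = if z i = 0 then 1 else 2 := by
    intro i
    split_ifs with h
    · simp [h]
    · exact encard_pair (Ne.symm h)
  rw [encard_pi_eq_prod_encard]
  simp only [hpair, Finset.prod_ite, Finset.prod_const_one, one_mul, Finset.prod_const]
  rw [← ncard_coe_finset, Finset.coe_filter]
  simp only [Finset.mem_univ, true_and, ne_eq]

theorem stmt_9_general {K : Type*} [Field K] (v : K → ℝ)
    (hnonneg : ∀ a : K, 0 ≤ v a)
    (hzero : ∀ a : K, v a = 0 ↔ a = 0)
    (hultra : ∀ a b : K, v (a + b) ≤ max (v a) (v b))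
    (n : ℕ) (φ : (Fin n → K) → (Fin n → K)) (hbij : Function.Bijective φ)
    (hiso : ∀ x y : Fin n → K, ∑ i, v (φ x i - φ y i) = ∑ i, v (x i - y i))
    (h0 : φ 0 = 0) :
    ∀ x : Fin n → K,
      Set.ncard {i : Fin n | φ x i ≠ 0} = Set.ncard {i : Fin n | x i ≠ 0} := by
  intro x
  have h := congrArg encard (image_metricInterval (d := l1Dist v) hbij hiso 0 x)
  rw [hbij.injective.encard_image, h0,
    metricInterval_l1Dist_zero hnonneg hzero hultra, encard_pi_pair_zero,
    metricInterval_l1Dist_zero hnonneg hzero hultra, encard_pi_pair_zero] at h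
  exact (Nat.pow_right_injective le_rfl (by exact_mod_cast h)).symm

/-- a centred bijective isometry of `(Kⁿ, ‖·‖₁)` preserves the
number of nonzero coordinates of each vector. -/
theorem stmt_9 {K : Type*} [Field K] (v : K → ℝ)
    (hnonneg : ∀ a : K, 0 ≤ v a)
    (hzero : ∀ a : K, v a = 0 ↔ a = 0)
    (hmul : ∀ a b : K, v (a * b) = v a * v b)
    (hultra : ∀ a b : K, v (a + b) ≤ max (v a) (v b))
    (n : ℕ) (φ : (Fin n → K) → (Fin n → K)) (hbij : Function.Bijective φ)
    (hiso : ∀ x y : Fin n → K, ∑ i, v (φ x i - φ y i) = ∑ i, v (x i - y i))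
    (h0 : φ 0 = 0) :
    ∀ x : Fin n → K,
      Set.ncard {i : Fin n | φ x i ≠ 0} = Set.ncard {i : Fin n | x i ≠ 0} :=
  stmt_9_general v hnonneg hzero hultra n φ hbij hiso h0
end
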